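/- Let H be a complex Hilbert space, Ω ∈ H a unit vector, and ψ the vector state on B(H) given by ψ(X) = ⟨Ω, X Ω⟩. Let α be a *-algebra automorphism of B(H), let I be an index set, and for each a ∈ I let V_a be a unitary operator such that ψ(α⁻¹(X)) = ψ(V_a⁻¹ X V_a) for all X ∈ B(H). Define h_{ab} := ψ(V_a⁻¹ V_b). Then for all a, b, c ∈ I: the unitary V_a⁻¹ V_b preserves ψ (i.e. ψ(V_a⁻¹V_b X V_b⁻¹V_a) = ψ(X) for all X), |h_{ab}| = 1, and h_{ab} · h_{bc} = h_{ac}. -/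

import Mathlib

/-!
Unitarity turns `ψ (star (V a) * X * V a)` into the vector state of the unit vector `V a Ω`, so
by hypothesis all the vectors `V a Ω` have the same vector state, namely `ψ ∘ α⁻¹`. Two unit
vectors with the same vector state differ by a phase: testing against the rank-one projection
onto one of them gives `|⟪v, u⟫| = 1 = ‖v‖ ‖u‖`, the equality case of Cauchy–Schwarz. As
`h_{ab} = ⟪V a Ω, V b Ω⟫`, this means `V b Ω = h_{ab} • V a Ω` with `|h_{ab}| = 1`, and the cocycle
identity follows by expanding `h_{ac} = ⟪V a Ω, h_{bc} • V b Ω⟫`.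
-/

open scoped InnerProductSpace

section VectorState

variable {𝕜 E : Type*} [RCLike 𝕜] [NormedAddCommGroup E] [InnerProductSpace 𝕜 E] {u v : E}

theorem norm_inner_eq_one_of_forall_inner_apply_eq (hv : ‖v‖ = 1)
    (h : ∀ X : E →L[𝕜] E, ⟪u, X u⟫_𝕜 = ⟪v, X v⟫_𝕜) : ‖⟪v, u⟫_𝕜‖ = 1 := by
  have hproj := h ((innerSL 𝕜 v).smulRight v)
  simp only [ContinuousLinearMap.smulRight_apply, innerSL_apply_apply, inner_smul_right,
    ← inner_conj_symm u v, RCLike.mul_conj, inner_self_eq_one_of_norm_eq_one hv, mul_one] at hproj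
  exact (pow_eq_one_iff_of_nonneg (norm_nonneg _) two_ne_zero).mp (by exact_mod_cast hproj)

theorem eq_inner_smul_of_forall_inner_apply_eq (hv : ‖v‖ = 1)
    (h : ∀ X : E →L[𝕜] E, ⟪u, X u⟫_𝕜 = ⟪v, X v⟫_𝕜) : u = ⟪v, u⟫_𝕜 • v := by
  have hu : ‖u‖ = 1 := by
    have hid := h 1
    rw [one_apply_eq_self, one_apply_eq_self, inner_self_eq_one_of_norm_eq_one hv,
      inner_self_eq_norm_sq_to_K] at hid
    exact (pow_eq_one_iff_of_nonneg (norm_nonneg _) two_ne_zero).mp (by exact_mod_cast hid)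
  have hCS : ‖⟪v, u⟫_𝕜‖ = ‖v‖ * ‖u‖ := by
    rw [hv, hu, one_mul, norm_inner_eq_one_of_forall_inner_apply_eq hv h]
  obtain hv0 | hu_eq := ((norm_inner_eq_norm_tfae 𝕜 v u).out 0 1).mp hCS
  · simp [hv0] at hv
  · rwa [inner_self_eq_one_of_norm_eq_one hv, div_one] at hu_eq

end VectorState

theorem inner_star_mul_apply {𝕜 H : Type*} [RCLike 𝕜] [NormedAddCommGroup H]
    [InnerProductSpace 𝕜 H] [CompleteSpace H] (A B : H →L[𝕜] H) (x y : H) :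
    ⟪x, (star A * B) y⟫_𝕜 = ⟪A x, B y⟫_𝕜 := by
  rw [ContinuousLinearMap.star_eq_adjoint]
  exact ContinuousLinearMap.adjoint_inner_right A x (B y)

/-- With `ψ` the vector state of a unit vector `Ω`, `α` a
*-automorphism of `B(H)`, and `V_a` unitaries all implementing
`ψ ∘ α⁻¹ = ψ ∘ Ad_{V_a⁻¹}`, the quantities `h_{ab} := ψ(V_a⁻¹ V_b)` satisfy: the unitary
`V_a⁻¹ V_b` preserves `ψ`, `|h_{ab}| = 1`, and `h_{ab} h_{bc} = h_{ac}`. -/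
theorem cech_one_cocycle_from_implementing_unitaries
    {H : Type*} [NormedAddCommGroup H] [InnerProductSpace ℂ H] [CompleteSpace H]
    {I : Type*} (Ω : H) (hΩ : ‖Ω‖ = 1)
    (ψ : (H →L[ℂ] H) → ℂ) (hψ : ∀ X, ψ X = inner ℂ Ω (X Ω))
    (α : (H →L[ℂ] H) ≃⋆ₐ[ℂ] (H →L[ℂ] H))
    (V : I → (H →L[ℂ] H))
    (hVu : ∀ a, V a ∈ unitary (H →L[ℂ] H))
    (hV : ∀ a X, ψ (α.symm X) = ψ (star (V a) * X * V a)) :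
    ∀ a b c : I,
      (∀ X, ψ (star (V a) * V b * X * star (V b) * V a) = ψ X) ∧
      ‖ψ (star (V a) * V b)‖ = 1 ∧
      ψ (star (V a) * V b) * ψ (star (V b) * V c) = ψ (star (V a) * V c) := by
  have hgram : ∀ a b, ψ (star (V a) * V b) = ⟪V a Ω, V b Ω⟫_ℂ := fun a b => by
    rw [hψ, inner_star_mul_apply]
  have hstate : ∀ a b (X : H →L[ℂ] H), ⟪V a Ω, X (V a Ω)⟫_ℂ = ⟪V b Ω, X (V b Ω)⟫_ℂ :=
    fun a b X => by
      have h := (hV a X).symm.trans (hV b X)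
      rwa [hψ, hψ, mul_assoc, mul_assoc, inner_star_mul_apply, inner_star_mul_apply] at h
  have hnorm : ∀ a, ‖V a Ω‖ = 1 := fun a => by
    rw [ContinuousLinearMap.norm_map_of_mem_unitary (hVu a), hΩ]
  intro a b c
  refine ⟨fun X => ?_, ?_, ?_⟩
  · have hb := Unitary.star_mul_self_of_mem (hVu b)
    calc ψ (star (V a) * V b * X * star (V b) * V a)
        = ψ (star (V a) * (V b * X * star (V b)) * V a) := by simp only [mul_assoc]
      _ = ψ (star (V b) * (V b * X * star (V b)) * V b) := by rw [← hV, ← hV]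
      _ = ψ X := by rw [← mul_assoc, ← mul_assoc, hb, one_mul, mul_assoc, hb, mul_one]
  · rw [hgram]
    exact norm_inner_eq_one_of_forall_inner_apply_eq (hnorm a) (hstate b a)
  · have hc : V c Ω = ⟪V b Ω, V c Ω⟫_ℂ • V b Ω :=
      eq_inner_smul_of_forall_inner_apply_eq (hnorm b) (hstate c b)
    rw [hgram, hgram, hgram, mul_comm]
    conv_rhs => rw [hc, inner_smul_right]
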